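/- Let π be a feasible ride for a cycle scenario R with cw(π) ≤ 3n and acwIdx(π) ≤ cwIdx(π). Setting α = acw(π), β = cw(π), (s°,t°) = (α,β), the 'unrolled' sequence τ_π(1),…,τ_π(len(π)) is a feasible ride for the path scenario ⟨G°,(τ_π(1), τ_π(len(π))), C°_{α,β} ∪ {(s°,t°)}⟩. -/

import Mathlib

namespace RideSharing

/-- A ride in a graph with adjacency `adj`: a nonempty sequence of nodes where
consecutive nodes are adjacent. -/
def IsRide (adj : ℕ → ℕ → Prop) (π : List ℕ) : Prop :=
  π ≠ [] ∧ π.Chain' adj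

/-- The cost of a ride: sum of the weights of traversed edges. -/
def cost (w : ℕ → ℕ → ℚ) : List ℕ → ℚ
  | [] => 0
  | [_] => 0
  | a :: b :: rest => w a b + cost w (b :: rest)

/-- A ride satisfies a request `(s,t)` if `s` occurs at a time step weakly before
an occurrence of `t`. -/
def Satisfies (π : List ℕ) (s t : ℕ) : Prop :=
  ∃ i j : ℕ, i ≤ j ∧ π[i]? = some s ∧ π[j]? = some t

/-- `Pre π' π` : `π'` is obtained from `π` by (repeatedly) removing a contiguous
subsequence of nodes (the relation `π' ⪯ π` of the paper, stated with 0-based indices: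
`π[1,i] , π[i',len]` becomes `π.take (i+1) ++ π.drop i'`). -/
inductive Pre : List ℕ → List ℕ → Prop
  | refl (π : List ℕ) : Pre π π
  | step (π' π : List ℕ) (i i' : ℕ) :
      i < i' → i' < π.length →
      (π[i + 1]? = π[i']? ∨ π[i]? = π[i' - 1]?) →
      Pre π' (π.take (i + 1) ++ π.drop i') → Pre π' π

/-- A ride-sharing scenario. -/
structure Scenario where
  adj : ℕ → ℕ → Prop
  w : ℕ → ℕ → ℚ
  s0 : ℕ
  t0 : ℕ
  C : Finset (ℕ × ℕ)

def Feasible (R : Scenario) (π : List ℕ) : Prop :=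
  IsRide R.adj π ∧ π.head? = some R.s0 ∧ π.getLast? = some R.t0 ∧
    ∀ r ∈ R.C, Satisfies π r.1 r.2

def Optimal (R : Scenario) (π : List ℕ) : Prop :=
  Feasible R π ∧ ∀ π', Feasible R π' → cost R.w π ≤ cost R.w π'

/-- The set `V_C` of endpoints of requests. -/
def VC (C : Finset (ℕ × ℕ)) : Finset ℕ := C.image Prod.fst ∪ C.image Prod.snd

/-- The path graph on `{1,…,n}`. -/
def pathAdj (n : ℕ) (a b : ℕ) : Prop :=
  (b = a + 1 ∨ a = b + 1) ∧ 1 ≤ a ∧ a ≤ n ∧ 1 ≤ b ∧ b ≤ n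

/-- The monotone segment of the path from `x` to `y`. -/
def seg (x y : ℕ) : List ℕ :=
  if x ≤ y then (List.range (y - x + 1)).map (fun k => x + k)
  else (List.range (x - y + 1)).map (fun k => x - k)

/-- The ride through a list of waypoints, concatenating monotone segments. -/
def rideThrough : List ℕ → List ℕ
  | [] => []
  | [x] => [x]
  | x :: y :: rest => seg x y ++ (rideThrough (y :: rest)).tail

/-- Concatenation of rides (`π ↦ π'`), inserting the monotone connecting segment
if the endpoints differ. -/
def rconcat (a b : List ℕ) : List ℕ :=
  a ++ (seg (a.getLastD 0) (b.headD 0)).tail ++ b.tail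


/-- The cycle graph on `{1,…,n}`. -/
def cycAdj (n : ℕ) (a b : ℕ) : Prop :=
  (b = a + 1 ∨ a = b + 1 ∨ (a = n ∧ b = 1) ∨ (a = 1 ∧ b = n)) ∧
    1 ≤ a ∧ a ≤ n ∧ 1 ≤ b ∧ b ≤ n

/-- Auxiliary computation of the winding numbers `ℓ_π`. -/
def ellAux (n : ℕ) : ℕ → ℤ → List ℕ → List ℤ
  | _, _, [] => []
  | prev, cur, x :: xs =>
    let c : ℤ := if prev = n ∧ x = 1 then cur + 1
      else if prev = 1 ∧ x = n then cur - 1 else cur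
    c :: ellAux n x c xs

/-- The list of winding numbers `ℓ_π(1),…,ℓ_π(len π)` (with `ℓ_π(1) = 0`). -/
def ellList (n : ℕ) : List ℕ → List ℤ
  | [] => []
  | x :: xs => 0 :: ellAux n x 0 xs

/-- The unrolled ride `τ_π(i) = π_i + (ℓ_π(i) − min_j ℓ_π(j))·n`. -/
def tauList (n : ℕ) (π : List ℕ) : List ℤ :=
  ((π.zip (ellList n π)).map
    (fun p => (p.1 : ℤ) + (p.2 - (ellList n π).foldr min 0) * n))

/-- `cw(π)`: maximum of `τ_π`. -/
def cw (n : ℕ) (π : List ℕ) : ℤ :=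
  (tauList n π).foldr max ((tauList n π).headD 0)

/-- `acw(π)`: minimum of `τ_π`. -/
def acw (n : ℕ) (π : List ℕ) : ℤ :=
  (tauList n π).foldr min ((tauList n π).headD 0)

/-- First time step at which `τ_π` attains `acw(π)`. -/
def acwIdx (n : ℕ) (π : List ℕ) : ℕ := (tauList n π).idxOf (acw n π)

/-- First time step at which `τ_π` attains `cw(π)`. -/
def cwIdx (n : ℕ) (π : List ℕ) : ℕ := (tauList n π).idxOf (cw n π)

/-- `mod n` with representatives in `{1,…,n}`, for natural numbers. -/
def mod1 (n v : ℕ) : ℕ := (v - 1) % n + 1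

/-- `mod n` with representatives in `{1,…,n}`, for integers. -/
def mod1Z (n : ℕ) (x : ℤ) : ℕ := ((x - 1) % (n : ℤ)).toNat + 1

/-- The weight function of the unrolled path `G°` on `{1,…,3n}`. -/
def wPath (n : ℕ) (w : ℕ → ℕ → ℚ) (a b : ℕ) : ℚ := w (mod1 n a) (mod1 n b)

/-- `V°_{α,β}`: nodes of `{α,…,β}` whose residue mod `n` is uniquely represented
in `{α,…,β}`. -/
def Vab (n  α β : ℕ) : Finset ℕ :=
  (Finset.Icc α β).filter (fun v =>
    ∀ v' ∈ Finset.Icc α β, mod1 n v' = mod1 n v → v' = v)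

/-- `C°_{α,β}`: the requests of `C` lifted to uniquely represented nodes of
`{α,…,β}`. -/
def Cab (n : ℕ) (C : Finset (ℕ × ℕ)) (α β : ℕ) : Finset (ℕ × ℕ) :=
  ((Finset.Icc α β) ×ˢ (Finset.Icc α β)).filter (fun p =>
    (mod1 n p.1, mod1 n p.2) ∈ C ∧ p.1 ∈ Vab n α β ∧ p.2 ∈ Vab n α β)

/-! Unrolling turns every step of the cyclic ride into a step `±1` of `τ_π`: the steps `n → 1`
and `1 → n` jump by `∓(n - 1)` on `{1,…,n}`, which the change `±1` of the winding number
compensates. Moreover `τ_π(i) ≡ π_i (mod n)`. So `τ_π` is a ride on the path `G°` that reduces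
to `π` mod `n`, and it stays in `[acw(π), cw(π)] ⊆ [1, 3n]`. A lifted request `(v_s, v_t)` is
then served by `τ_π` at the same time steps at which `π` serves `(v_s mod n, v_t mod n)`,
because `v_s` and `v_t` are the only representatives of their residues that `τ_π` can visit;
and `(acw(π), cw(π))` is served because `τ_π` reaches its minimum no later than its maximum. -/

section Lists

variable {α : Type*}

lemma foldr_mem_cons_of_choice (f : α → α → α) (hf : ∀ a b, f a b = a ∨ f a b = b)
    (l : List α) (b : α) : l.foldr f b ∈ b :: l := by
  induction l with
  | nil => simp
  | cons a t ih =>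
    rcases hf a (t.foldr f b) with h | h <;> rw [List.foldr_cons, h]
    · simp
    · grind

lemma foldr_headD_mem_of_choice (f : α → α → α) (hf : ∀ a b, f a b = a ∨ f a b = b)
    {l : List α} (hl : l ≠ []) (d : α) : l.foldr f (l.headD d) ∈ l := by
  obtain ⟨a, t, rfl⟩ := List.exists_cons_of_ne_nil hl
  simpa using foldr_mem_cons_of_choice f hf (a :: t) a

lemma head?_map_of_ne_nil {β : Type*} (f : α → β) {l : List α} (hl : l ≠ []) (d : α) :
    (l.map f).head? = some (f (l.headD d)) := by
  obtain ⟨a, t, rfl⟩ := List.exists_cons_of_ne_nil hl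
  rfl

lemma getLast?_map_of_ne_nil {β : Type*} (f : α → β) {l : List α} (hl : l ≠ []) (d : α) :
    (l.map f).getLast? = some (f (l.getLastD d)) := by
  rw [List.getLast?_map, List.getLastD_eq_getLast?, List.getLast?_eq_some_getLast hl]
  rfl

end Lists

lemma Satisfies.of_map {f : ℕ → ℕ} {ρ : List ℕ} {a b : ℕ}
    (ha : ∀ v ∈ ρ, f v = f a → v = a) (hb : ∀ v ∈ ρ, f v = f b → v = b)
    (h : Satisfies (ρ.map f) (f a) (f b)) : Satisfies ρ a b := by
  obtain ⟨i, j, hij, hi, hj⟩ := h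
  rw [List.getElem?_map, Option.map_eq_some_iff] at hi hj
  obtain ⟨u, hu, hua⟩ := hi
  obtain ⟨v, hv, hvb⟩ := hj
  exact ⟨i, j, hij, ha u (List.mem_of_getElem? hu) hua ▸ hu,
    hb v (List.mem_of_getElem? hv) hvb ▸ hv⟩

lemma satisfies_map_of_idxOf_le {α : Type*} [BEq α] [LawfulBEq α] (f : α → ℕ) {l : List α}
    {a b : α} (ha : a ∈ l) (hb : b ∈ l) (h : l.idxOf a ≤ l.idxOf b) :
    Satisfies (l.map f) (f a) (f b) := by
  refine ⟨l.idxOf a, l.idxOf b, h, ?_, ?_⟩ <;>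
    simp [List.idxOf_lt_length_iff, ha, hb]

lemma isChain_map_toNat_pathAdj {N : ℕ} {l : List ℤ}
    (h : l.IsChain fun x y => y = x + 1 ∨ x = y + 1) (hl : ∀ x ∈ l, 1 ≤ x ∧ x ≤ N) :
    (l.map Int.toNat).IsChain (pathAdj N) := by
  rw [List.isChain_map]
  refine h.imp_of_mem_imp fun x y hx hy hxy => ?_
  have := hl x hx
  have := hl y hy
  unfold pathAdj
  omega

lemma eq_of_mem_Vab {n α β u v : ℕ} (hv : v ∈ Vab n α β) (hu : u ∈ Finset.Icc α β)
    (h : mod1 n u = mod1 n v) : u = v :=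
  (Finset.mem_filter.1 hv).2 u hu h

lemma eq_or_mem_Icc_of_isChain_cycAdj {n s : ℕ} {π : List ℕ} (h : π.IsChain (cycAdj n))
    (hhead : π.head? = some s) : ∀ x ∈ π, x = s ∨ 1 ≤ x ∧ x ≤ n :=
  h.induction _ _ (fun _ _ hxy _ => .inr hxy.2.2.2) fun hne =>
    .inl ((List.head_eq_iff_head?_eq_some hne).2 hhead)

section Unrolling

variable {n : ℕ} {π : List ℕ}

lemma ellAux_length (n a : ℕ) (c : ℤ) (xs : List ℕ) :
    (ellAux n a c xs).length = xs.length := by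
  induction xs generalizing a c with
  | nil => rfl
  | cons b xs ih => simp [ellAux, ih]

lemma ellList_length (n : ℕ) (π : List ℕ) : (ellList n π).length = π.length := by
  cases π with
  | nil => rfl
  | cons a xs => simp [ellList, ellAux_length]

lemma tauList_ne_nil (hπ : π ≠ []) : tauList n π ≠ [] := by
  simpa [← List.length_pos_iff, tauList, ellList_length] using hπ

lemma isChain_unroll_ellAux (m : ℤ) {a : ℕ} {xs : List ℕ} (c : ℤ)
    (h : (a :: xs).IsChain (cycAdj n)) :
    (((a : ℤ) + (c - m) * n) ::
      (xs.zip (ellAux n a c xs)).map fun p => (p.1 : ℤ) + (p.2 - m) * n).IsChain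
      fun x y => y = x + 1 ∨ x = y + 1 := by
  induction xs generalizing a c with
  | nil => exact List.isChain_singleton _
  | cons b xs ih =>
    rw [List.isChain_cons_cons] at h
    obtain ⟨⟨hab, -, -, -, -⟩, h⟩ := h
    simp only [ellAux, List.zip_cons_cons, List.map_cons]
    refine List.isChain_cons_cons.2 ⟨?_, ih _ h⟩
    split_ifs <;> grind

lemma isChain_tauList (h : π.IsChain (cycAdj n)) :
    (tauList n π).IsChain fun x y => y = x + 1 ∨ x = y + 1 := by
  cases π with
  | nil => exact List.isChain_nil
  | cons a xs => simpa [tauList, ellList] using isChain_unroll_ellAux _ 0 h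

lemma mod1_toNat_add_mul {s : ℕ} (hs : 1 ≤ s ∧ s ≤ n) (K : ℕ) :
    mod1 n ((s : ℤ) + K * n).toNat = s := by
  have : ((s : ℤ) + K * n).toNat = (s - 1) + K * n + 1 := by omega
  rw [mod1, this, Nat.add_sub_cancel, Nat.add_mul_mod_self_right,
    Nat.mod_eq_of_lt (by omega)]
  omega

lemma exists_unroll_eq_add_mul {p : ℕ × ℤ} (hp : p ∈ π.zip (ellList n π)) :
    ∃ K : ℕ, (p.1 : ℤ) + (p.2 - (ellList n π).foldr min 0) * n = p.1 + K * n := by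
  have hmin : (ellList n π).foldr min 0 ≤ p.2 :=
    List.min_le_of_le' 0 (List.of_mem_zip hp).2 le_rfl
  exact ⟨(p.2 - (ellList n π).foldr min 0).toNat, by rw [Int.toNat_of_nonneg (by omega)]⟩

lemma mem_tauList {x : ℤ} (hx : x ∈ tauList n π) : ∃ s ∈ π, ∃ K : ℕ, x = s + K * n := by
  obtain ⟨p, hp, rfl⟩ := List.mem_map.1 hx
  exact ⟨p.1, (List.of_mem_zip hp).1, exists_unroll_eq_add_mul hp⟩

lemma one_le_of_mem_tauList (hπ : ∀ s ∈ π, 1 ≤ s) {x : ℤ} (hx : x ∈ tauList n π) : 1 ≤ x := by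
  obtain ⟨s, hs, K, rfl⟩ := mem_tauList hx
  have : (1 : ℤ) ≤ s := by exact_mod_cast hπ s hs
  linarith [show (0 : ℤ) ≤ K * n by positivity]

lemma map_mod1_tauList (hπ : ∀ s ∈ π, 1 ≤ s ∧ s ≤ n) :
    ((tauList n π).map Int.toNat).map (mod1 n) = π := by
  conv_rhs => rw [← List.map_fst_zip (l₂ := ellList n π) (ellList_length n π).ge]
  simp only [tauList, List.map_map]
  refine List.map_congr_left fun p hp => ?_
  obtain ⟨K, hK⟩ := exists_unroll_eq_add_mul hp
  simp only [Function.comp_apply, hK]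
  exact mod1_toNat_add_mul (hπ _ (List.of_mem_zip hp).1) K

lemma acw_mem (hπ : π ≠ []) : acw n π ∈ tauList n π :=
  foldr_headD_mem_of_choice min min_choice (tauList_ne_nil hπ) 0

lemma cw_mem (hπ : π ≠ []) : cw n π ∈ tauList n π :=
  foldr_headD_mem_of_choice max max_choice (tauList_ne_nil hπ) 0

lemma acw_le {x : ℤ} (hx : x ∈ tauList n π) : acw n π ≤ x :=
  List.min_le_of_le' _ hx le_rfl

lemma le_cw {x : ℤ} (hx : x ∈ tauList n π) : x ≤ cw n π :=
  List.le_max_of_le' _ hx le_rfl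

lemma mem_Icc_of_mem_map_toNat_tauList {v : ℕ} (hv : v ∈ (tauList n π).map Int.toNat) :
    v ∈ Finset.Icc (acw n π).toNat (cw n π).toNat := by
  obtain ⟨x, hx, rfl⟩ := List.mem_map.1 hv
  exact Finset.mem_Icc.2 ⟨Int.toNat_le_toNat (acw_le hx), Int.toNat_le_toNat (le_cw hx)⟩

end Unrolling

theorem unroll_feasible_general (n : ℕ) (w : ℕ → ℕ → ℚ)
    (t0 : ℕ) (C : Finset (ℕ × ℕ))
    (π : List ℕ) (hfeas : Feasible ⟨cycAdj n, w, 1, t0, C⟩ π)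
    (hcw : cw n π ≤ 3 * n) (hidx : acwIdx n π ≤ cwIdx n π) :
    Feasible ⟨pathAdj (3 * n), wPath n w,
        ((tauList n π).headD 0).toNat, ((tauList n π).getLastD 0).toNat,
        insert ((acw n π).toNat, (cw n π).toNat)
          (Cab n C (acw n π).toNat (cw n π).toNat)⟩
      ((tauList n π).map Int.toNat) := by
  obtain ⟨⟨hne, hchain⟩, hhead, -, hsat⟩ := hfeas
  have hπ : ∀ x ∈ π, x = 1 ∨ 1 ≤ x ∧ x ≤ n := eq_or_mem_Icc_of_isChain_cycAdj hchain hhead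
  have hτ : ∀ x ∈ tauList n π, 1 ≤ x ∧ x ≤ 3 * n := fun x hx =>
    ⟨one_le_of_mem_tauList (fun s hs => by rcases hπ s hs with rfl | h <;> omega) hx,
      (le_cw hx).trans hcw⟩
  have hn : 1 ≤ n := by have := hτ _ (acw_mem hne); omega
  have hbnd : ∀ s ∈ π, 1 ≤ s ∧ s ≤ n := fun s hs => by rcases hπ s hs with rfl | h <;> omega
  refine ⟨⟨by simpa using tauList_ne_nil hne,
      isChain_map_toNat_pathAdj (isChain_tauList hchain) hτ⟩,
    head?_map_of_ne_nil _ (tauList_ne_nil hne) 0,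
    getLast?_map_of_ne_nil _ (tauList_ne_nil hne) 0, ?_⟩
  rintro ⟨vs, vt⟩ hr
  rcases Finset.mem_insert.1 hr with heq | hmem
  · rw [heq]
    exact satisfies_map_of_idxOf_le Int.toNat (acw_mem hne) (cw_mem hne) hidx
  · obtain ⟨-, hC, hvs, hvt⟩ := Finset.mem_filter.1 hmem
    refine Satisfies.of_map (fun v hv => eq_of_mem_Vab hvs (mem_Icc_of_mem_map_toNat_tauList hv))
      (fun v hv => eq_of_mem_Vab hvt (mem_Icc_of_mem_map_toNat_tauList hv)) ?_
    rw [map_mod1_tauList hbnd]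
    exact hsat _ hC

/-- a feasible ride `π` on the cycle with `cw(π) ≤ 3n` and
`acwIdx(π) ≤ cwIdx(π)` unrolls, via `τ_π`, to a feasible ride for the path scenario
`⟨G°, (τ_π(1), τ_π(len π)), C°_{α,β} ∪ {(α,β)}⟩` where `α = acw(π)`, `β = cw(π)`. -/
theorem unroll_feasible (n : ℕ) (hn : 3 ≤ n) (w : ℕ → ℕ → ℚ)
    (t0 : ℕ) (C : Finset (ℕ × ℕ)) (ht0 : 1 ≤ t0 ∧ t0 ≤ n)
    (hC : ∀ r ∈ C, 1 ≤ r.1 ∧ r.1 ≤ n ∧ 1 ≤ r.2 ∧ r.2 ≤ n)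
    (π : List ℕ) (hfeas : Feasible ⟨cycAdj n, w, 1, t0, C⟩ π)
    (hcw : cw n π ≤ 3 * n) (hidx : acwIdx n π ≤ cwIdx n π) :
    Feasible ⟨pathAdj (3 * n), wPath n w,
        ((tauList n π).headD 0).toNat, ((tauList n π).getLastD 0).toNat,
        insert ((acw n π).toNat, (cw n π).toNat)
          (Cab n C (acw n π).toNat (cw n π).toNat)⟩
      ((tauList n π).map Int.toNat) :=
  unroll_feasible_general n w t0 C π hfeas hcw hidx

end RideSharing
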